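/- Let Σ be a signature and T be a Σ-term. For any internal node i of T different from the root, the parent of i in T is the greatest internal node i' such that i' < i and i' + sc(T)(i') ≥ i, where sc(T)(i') is the number of descendants of i'. -/

import Mathlib

structure Signature where
  carrier : Type
  arity : carrier → ℕ

namespace EW

variable {σ : Signature}

/-- Σ-terms: planar rooted trees with nodes decorated by the signature. -/
inductive PreTerm (σ : Signature) where
  | leaf : PreTerm σ
  | node : σ.carrier → List (PreTerm σ) → PreTerm σ

/-- Well-formedness: each internal node decorated by `s` has `arity s` children. -/
def WF : PreTerm σ → Prop
  | .leaf => True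
  | .node s l => l.length = σ.arity s ∧ ∀ t ∈ l, WF t

def isLeaf : PreTerm σ → Bool
  | .leaf => true
  | .node _ _ => false

/-- Subterm at an address (list of 0-based child positions). -/
def subAt : PreTerm σ → List ℕ → Option (PreTerm σ)
  | t, [] => some t
  | .leaf, _ :: _ => none
  | .node _ l, j :: p =>
      match l[j]? with
      | some t => subAt t p
      | none => none
  termination_by t p => p.length

/-- Replace the subterm at an address. -/
def replaceAt : PreTerm σ → List ℕ → PreTerm σ → PreTerm σ
  | _, [], R => R
  | .leaf, _ :: _, _ => .leaf
  | .node s l, j :: p, R => .node s (l.set j (replaceAt (l.getD j .leaf) p R))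
  termination_by t p _ => p.length

/-- Addresses of all positions (internal nodes and leaves) in preorder. -/
def addrs : PreTerm σ → List (List ℕ)
  | .leaf => [[]]
  | .node _ l =>
      [] :: ((l.attach.map (fun t => addrs t.1)).zipIdx.map
        (fun jp => jp.1.map (jp.2 :: ·))).flatten
  decreasing_by
    have := List.sizeOf_lt_of_mem t.2
    simp only [PreTerm.node.sizeOf_spec]
    omega

def isNodeAt (T : PreTerm σ) (p : List ℕ) : Bool :=
  match subAt T p with
  | some (.node _ _) => true
  | _ => false

/-- Addresses of internal nodes, in preorder. -/
def nodeAddrs (T : PreTerm σ) : List (List ℕ) := (addrs T).filter (isNodeAt T)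

/-- Degree: number of internal nodes. -/
def deg (T : PreTerm σ) : ℕ := (nodeAddrs T).length

/-- Address of the `i`-th internal node (1-indexed, preorder). -/
def nodeAddr (T : PreTerm σ) (i : ℕ) : Option (List ℕ) := (nodeAddrs T)[i-1]?

/-- Preorder index (1-based) of the internal node at address `p`. -/
def nodeIdx (T : PreTerm σ) (p : List ℕ) : ℕ := (nodeAddrs T).idxOf p + 1

/-- Parent of internal node `i` (the root is its own parent). -/
def paOf (T : PreTerm σ) (i : ℕ) : ℕ :=
  match nodeAddr T i with
  | some [] => 1
  | some p => nodeIdx T p.dropLast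
  | none => 0

/-- Local position of internal node `i` among its parent's children
(1-based; the root has local position 0). -/
def lpOf (T : PreTerm σ) (i : ℕ) : ℕ :=
  match nodeAddr T i with
  | some [] => 0
  | some p => p.getLast?.getD 0 + 1
  | none => 0

def decAt (T : PreTerm σ) (p : List ℕ) : Option σ.carrier :=
  match subAt T p with
  | some (.node s _) => some s
  | _ => none

/-- The decoration word: decorations of internal nodes in preorder. -/
def dcWord (T : PreTerm σ) : List σ.carrier := (nodeAddrs T).filterMap (decAt T)

def arityOfNode (T : PreTerm σ) (i : ℕ) : ℕ :=
  match nodeAddr T i with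
  | some p =>
      match decAt T p with
      | some s => σ.arity s
      | none => 0
  | none => 0

/-- The connection word entry:
`cnc T i = pa T i + 1 - 2 ^ (lp T i - arity (decoration of pa T i))`. -/
def cnc (T : PreTerm σ) (i : ℕ) : ℚ :=
  (paOf T i : ℚ) + 1 - (2 : ℚ) ^ ((lpOf T i : ℤ) - (arityOfNode T (paOf T i) : ℤ))

def cncWord (T : PreTerm σ) : List ℚ := (List.range (deg T)).map (fun k => cnc T (k+1))

/-- The Σ-easterly wind order. -/
def ewLE (T₁ T₂ : PreTerm σ) : Prop :=
  dcWord T₁ = dcWord T₂ ∧ ∀ i, 1 ≤ i → i ≤ deg T₁ → cnc T₁ i ≤ cnc T₂ i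

/-- The easterly wind rewrite rule `T₁ ⇀_i T₂` : the internal node `i` of `T₁`
is visited immediately after a leaf in preorder, and `T₂` is obtained by moving
the subterm rooted at `i` onto that leaf. -/
def Rewrite (i : ℕ) (T₁ T₂ : PreTerm σ) : Prop :=
  ∃ p q k S,
    nodeAddr T₁ i = some p ∧
    (addrs T₁)[k]? = some q ∧ (addrs T₁)[k+1]? = some p ∧
    subAt T₁ q = some .leaf ∧
    subAt T₁ p = some S ∧
    T₂ = replaceAt (replaceAt T₁ p .leaf) q S

def RewriteAny (T₁ T₂ : PreTerm σ) : Prop := ∃ i, 1 ≤ i ∧ Rewrite i T₁ T₂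

/-- `(i₁, j₁, i)` is dominated by `(i₂, j₂, i)` iff `(i₁, -j₁) ≤lex (i₂, -j₂)`:
here on the pairs of (parent, local position). -/
def Dominated (e₁ e₂ : ℕ × ℕ) : Prop := e₁.1 < e₂.1 ∨ (e₁.1 = e₂.1 ∧ e₂.2 ≤ e₁.2)

/-- `i''` is a (strict) descendant of `i'`. -/
def Desc (T : PreTerm σ) (i' i'' : ℕ) : Prop :=
  ∃ p q, nodeAddr T i' = some p ∧ nodeAddr T i'' = some q ∧ p <+: q ∧ p ≠ q

end EW
namespace EW

variable {σ : Signature}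

def sortNodesFirst (l : List (PreTerm σ)) : List (PreTerm σ) :=
  l.filter (fun t => !isLeaf t) ++ l.filter (fun t => isLeaf t)

def sortLeavesFirst (l : List (PreTerm σ)) : List (PreTerm σ) :=
  l.filter (fun t => isLeaf t) ++ l.filter (fun t => !isLeaf t)

mutual
/-- Tilting map: at every internal node whose preorder index (the second
argument is the index of the current root) belongs to `X`, rearrange the
children so that the non-leaf children, keeping their relative order, come
before the leaf children. -/
def tltT (X : ℕ → Prop) [DecidablePred X] : PreTerm σ → ℕ → PreTerm σ
  | .leaf, _ => .leaf
  | .node s l, n =>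
      .node s (if X n then sortNodesFirst (tltL X l (n+1)) else tltL X l (n+1))
def tltL (X : ℕ → Prop) [DecidablePred X] : List (PreTerm σ) → ℕ → List (PreTerm σ)
  | [], _ => []
  | t :: ts, n => tltT X t n :: tltL X ts (n + deg t)
end

mutual
/-- Reversed tilting map: leaf children first. -/
def tltRT (X : ℕ → Prop) [DecidablePred X] : PreTerm σ → ℕ → PreTerm σ
  | .leaf, _ => .leaf
  | .node s l, n =>
      .node s (if X n then sortLeavesFirst (tltRL X l (n+1)) else tltRL X l (n+1))
def tltRL (X : ℕ → Prop) [DecidablePred X] : List (PreTerm σ) → ℕ → List (PreTerm σ)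
  | [], _ => []
  | t :: ts, n => tltRT X t n :: tltRL X ts (n + deg t)
end

/-- The X-tilting map. -/
def tlt (X : ℕ → Prop) [DecidablePred X] (T : PreTerm σ) : PreTerm σ := tltT X T 1

/-- The X-reversed tilting map. -/
def tltR (X : ℕ → Prop) [DecidablePred X] (T : PreTerm σ) : PreTerm σ := tltRT X T 1

/-- Fully tilted: tilted w.r.t. the set of all positive integers. -/
def FullyTilted (T : PreTerm σ) : Prop := tlt (fun n => 1 ≤ n) T = T

/-- {1}-tilted. -/
def tltOne (T : PreTerm σ) : PreTerm σ := tlt (fun n => n = 1) T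

/-- Number of internal-node siblings of the node `i` lying weakly to its left
(including `i` itself). -/
def lb (T : PreTerm σ) (i : ℕ) : ℕ :=
  match nodeAddr T i with
  | some [] => 0
  | some p =>
      match subAt T p.dropLast with
      | some (.node _ l) =>
          ((l.take (p.getLast?.getD 0 + 1)).filter (fun t => !isLeaf t)).length
      | _ => 0
  | none => 0

/-- Scope: number of (strict) internal-node descendants of the node `i`. -/
def sc (T : PreTerm σ) (i : ℕ) : ℕ :=
  match nodeAddr T i with
  | some p =>
      match subAt T p with
      | some S => deg S - 1
      | none => 0
  | none => 0

end EW
namespace EW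

variable {σ : Signature}

/-- The signature Σ_ℕ := Σ ⊔ ℕ, where `n : ℕ` has arity `n`. -/
def sigN (σ : Signature) : Signature := ⟨σ.carrier ⊕ ℕ, Sum.elim σ.arity id⟩

/-- All decorations come from Σ (no ℕ-decoration). -/
def OnlyBase : PreTerm (sigN σ) → Prop
  | .leaf => True
  | .node (Sum.inl _) l => ∀ t ∈ l, OnlyBase t
  | .node (Sum.inr _) _ => False
  decreasing_by
    all_goals
      have := List.sizeOf_lt_of_mem ‹_ ∈ _›
      first
        | (rw [PreTerm.node.sizeOf_spec]; omega)
        | (erw [PreTerm.node.sizeOf_spec]; omega)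
        | (unfold sigN at *; simp only [PreTerm.node.sizeOf_spec]; omega)

/-- The corolla on `s`: a single internal node with `arity s` leaves. -/
def corolla (s : σ.carrier) : PreTerm σ := .node s (List.replicate (σ.arity s) .leaf)

/-- Number of leaves (arity) of a term. -/
def arT (T : PreTerm σ) : ℕ := ((addrs T).filter (fun p => !isNodeAt T p)).length

mutual
/-- Replace the leftmost leaf of the first term by the second term. -/
def graftLeft : PreTerm σ → PreTerm σ → PreTerm σ
  | .leaf, R => R
  | .node s l, R => .node s (graftLeftL l R)
def graftLeftL : List (PreTerm σ) → PreTerm σ → List (PreTerm σ)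
  | [], _ => []
  | t :: ts, R => if arT t = 0 then t :: graftLeftL ts R else graftLeft t R :: ts
end

/-- `f↑(w)`: the forest of corollas `|w| · C(w 1) ⋯ C(w n)`. -/
def fUp (w : List σ.carrier) : PreTerm (sigN σ) :=
  .node (Sum.inr w.length) (w.map (fun s => corolla (σ := sigN σ) (Sum.inl s)))

/-- `f↓(w)`: iteratively graft the corollas of the letters of `w` onto the
leftmost leaf, starting from the corolla of `|w|`. -/
def fDown (w : List σ.carrier) : PreTerm (sigN σ) :=
  w.foldl (fun F s => graftLeft F (corolla (σ := sigN σ) (Sum.inl s)))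
    (corolla (σ := sigN σ) (Sum.inr w.length))

/-- Σ-forest: a Σ_ℕ-term `n · T₁ ⋯ T_n` with the `Tᵢ`'s Σ-terms. -/
def IsForest (F : PreTerm (sigN σ)) : Prop :=
  WF F ∧ ∃ n l, F = .node (Sum.inr n) l ∧ ∀ t ∈ l, OnlyBase t

/-- Size of a balanced forest: its degree minus one. -/
def fsize (F : PreTerm (sigN σ)) : ℕ := deg F - 1

/-- Balanced Σ-forest: `deg F = n + 1` where `n` decorates the root. -/
def IsBalanced (F : PreTerm (sigN σ)) : Prop :=
  IsForest F ∧ ∃ n l, F = .node (Sum.inr n) l ∧ deg F = n + 1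

/-- Leaning Σ-forest: balanced and {1}-tilted. -/
def IsLeaning (F : PreTerm (sigN σ)) : Prop := IsBalanced F ∧ tltOne F = F

/-- Concatenation of forests. -/
def fconc : PreTerm (sigN σ) → PreTerm (sigN σ) → PreTerm (sigN σ)
  | .node (Sum.inr n) l, .node (Sum.inr n') l' => .node (Sum.inr (n + n')) (l ++ l')
  | F, _ => F

/-- The over operation on leaning forests. -/
def over' (F₁ F₂ : PreTerm (sigN σ)) : PreTerm (sigN σ) := tltOne (fconc F₁ F₂)

/-- Number of extreme leaves: leaves visited after every internal node. -/
def extremeCount (T : PreTerm σ) : ℕ :=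
  (((addrs T).map (fun p => !isNodeAt T p)).reverse.takeWhile id).length

mutual
/-- Graft the terms of the second argument (listed from the rightmost extreme
leaf to the leftmost) onto the extreme leaves of the first argument, from the
right. Returns the new term, the unused grafts and whether everything seen so
far is still in the extreme zone. -/
def gET : PreTerm σ → List (PreTerm σ) → PreTerm σ × List (PreTerm σ) × Bool
  | .leaf, ts =>
      match ts with
      | [] => (.leaf, [], true)
      | g :: gs => (g, gs, true)
  | .node s l, ts =>
      let r := gEL l ts
      (.node s r.1, r.2.1, false)
def gEL : List (PreTerm σ) → List (PreTerm σ) → List (PreTerm σ) × List (PreTerm σ) × Bool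
  | [], ts => ([], ts, true)
  | t :: us, ts =>
      let r := gEL us ts
      if r.2.2 then
        let a := gET t r.2.1
        (a.1 :: r.1, a.2.1, a.2.2)
      else (t :: r.1, r.2.1, false)
end

def childrenOf : PreTerm (sigN σ) → List (PreTerm (sigN σ))
  | .node _ l => l
  | .leaf => []

/-- The under operation on leaning forests: graft the root subterms of
`F₂ ⌢ C(r)` onto the extreme leaves of `F₁ ⌢ C(n₂)`. -/
def under (F₁ F₂ : PreTerm (sigN σ)) : PreTerm (sigN σ) :=
  (gET (fconc F₁ (corolla (σ := sigN σ) (Sum.inr (fsize F₂))))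
    (List.replicate (extremeCount F₁) PreTerm.leaf ++ (childrenOf F₂).reverse)).1

mutual
/-- Restriction machinery: keep only the internal nodes whose preorder index
satisfies `K`; kept nodes whose parent is removed float to the root. Returns,
for a subterm, the in-place result (a leaf if the root of the subterm is
removed) together with the list of floated subtrees. -/
def restT (K : ℕ → Bool) : PreTerm (sigN σ) → ℕ → PreTerm (sigN σ) × List (PreTerm (sigN σ))
  | .leaf, _ => (.leaf, [])
  | .node s l, n =>
      let r := restL K l (n+1)
      if K n then (.node s (r.map Prod.fst), (r.map Prod.snd).flatten)
      else (.leaf, (r.map (fun a => (if isLeaf a.1 then [] else [a.1]) ++ a.2)).flatten)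
def restL (K : ℕ → Bool) :
    List (PreTerm (sigN σ)) → ℕ → List (PreTerm (sigN σ) × List (PreTerm (sigN σ)))
  | [], _ => []
  | t :: ts, n => restT K t n :: restL K ts (n + deg t)
end

def sumDeg (l : List (PreTerm σ)) : ℕ := (l.map deg).sum

/-- Restriction of a leaning forest to a set `I` of indices: keep the root and
the internal nodes `{i + 1 : i ∈ I}`, together with their adjacent edges;
the root gets decoration `#I` and is padded by leaves on the right. -/
def restrict (F : PreTerm (sigN σ)) (I : Finset ℕ) : PreTerm (sigN σ) :=
  match F with
  | .node (Sum.inr _) l =>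
      let r := restL (fun i => decide (i - 1 ∈ I ∧ 2 ≤ i)) l 2
      let cs := (r.map (fun a => (if isLeaf a.1 then [] else [a.1]) ++ a.2)).flatten
      .node (Sum.inr I.card) (cs ++ List.replicate (I.card - sumDeg cs) .leaf)
  | F => F

/-- k-top restriction. -/
def topRes (k : ℕ) (F : PreTerm (sigN σ)) : PreTerm (sigN σ) := restrict F (Finset.Icc 1 k)

/-- k-bottom restriction. -/
def botRes (k : ℕ) (F : PreTerm (sigN σ)) : PreTerm (sigN σ) :=
  restrict F (Finset.Icc (k+1) (fsize F))

end EW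
namespace EW

/-- The signature ℕ where `arity n = n`. -/
def natSig : Signature := ⟨ℕ, id⟩

/-- `f↑` for words on the signature ℕ. -/
def fUpN (w : List ℕ) : PreTerm natSig :=
  .node w.length (w.map (corolla (σ := natSig)))

/-- `f↓` for words on the signature ℕ. -/
def fDownN (w : List ℕ) : PreTerm natSig :=
  w.foldl (fun F s => graftLeft F (corolla (σ := natSig) s))
    (corolla (σ := natSig) w.length)

/-- The word `dw n = (n-1, n-2, …, 0)`. -/
def dwWord (n : ℕ) : List ℕ := (List.range n).reverse

/-- The minimum `dt n := n · C(n-1) ⋯ C(0)` of the rooted tree easterly wind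
poset of order `n`. -/
def dt (n : ℕ) : PreTerm natSig := fUpN (dwWord n)

/-- Rooted trees. -/
inductive RTree where
  | node : List RTree → RTree

mutual
/-- Size (number of nodes) of a rooted tree. -/
def rsize : RTree → ℕ
  | .node l => 1 + rsizeL l
def rsizeL : List RTree → ℕ
  | [] => 0
  | t :: ts => rsize t + rsizeL ts
end

mutual
/-- Scope sequence of a rooted tree: number of descendants of each node, in
preorder. -/
def scL : RTree → List ℕ
  | .node l => rsizeL l :: scLL l
def scLL : List RTree → List ℕ
  | [] => []
  | t :: ts => scL t ++ scLL ts
end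

/-- The Tamari order on rooted trees (Knuth's realization): componentwise
comparison of scope sequences. -/
def tamLE (R₁ R₂ : RTree) : Prop :=
  rsize R₁ = rsize R₂ ∧ ∀ i, (scL R₁).getD i 0 ≤ (scL R₂).getD i 0

mutual
/-- Underlying rooted tree of a term: delete the leaves and forget the
decorations. -/
def rt {σ : Signature} : PreTerm σ → RTree
  | .leaf => .node []
  | .node _ l => .node (rtL l)
def rtL {σ : Signature} : List (PreTerm σ) → List RTree
  | [] => []
  | .leaf :: ts => rtL ts
  | .node _ l :: ts => .node (rtL l) :: rtL ts
end

end EW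

namespace EW
variable {σ : Signature}

/-- Forest version of `nodeAddrs` with starting child index `j`. -/
def naF : ℕ → List (PreTerm σ) → List (List ℕ)
  | _, [] => []
  | j, t :: ts => (nodeAddrs t).map (j :: ·) ++ naF (j+1) ts

/-- Flattening with cons of increasing indices. -/
def aFlat : ℕ → List (List (List ℕ)) → List (List ℕ)
  | _, [] => []
  | j, A :: As => A.map (j :: ·) ++ aFlat (j+1) As

theorem enumFrom_flatten : ∀ (As : List (List (List ℕ))) (j : ℕ),
    ((As.zipIdx j).map (fun jp => jp.1.map (jp.2 :: ·))).flatten = aFlat j As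
  | [], j => rfl
  | A :: As, j => by
      simp only [List.zipIdx_cons, List.map_cons, List.flatten_cons, aFlat]
      rw [enumFrom_flatten]

theorem addrs_node (s : σ.carrier) (l : List (PreTerm σ)) :
    addrs (.node s l) = [] :: aFlat 0 (l.map addrs) := by
  rw [addrs]
  congr 1
  rw [show (l.attach.map (fun t => addrs t.1)) = l.map addrs by
    simp [List.attach_map_val]]
  rw [enumFrom_flatten]

theorem subAt_nil (t : PreTerm σ) : subAt t [] = some t := by rw [subAt]

theorem subAt_cons (s : σ.carrier) (l : List (PreTerm σ)) (j : ℕ) (p : List ℕ) :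
    subAt (.node s l) (j :: p) =
      match l[j]? with | some t => subAt t p | none => none := by
  rw [subAt]

theorem isNodeAt_cons (s : σ.carrier) (l : List (PreTerm σ)) (j : ℕ) (p : List ℕ)
    (t : PreTerm σ) (ht : l[j]? = some t) :
    isNodeAt (.node s l) (j :: p) = isNodeAt t p := by
  unfold isNodeAt
  rw [subAt_cons, ht]

theorem filter_aFlat : ∀ (ts : List (PreTerm σ)) (j : ℕ) (P : List ℕ → Bool),
    (∀ k t p, ts[k]? = some t → P ((j+k) :: p) = isNodeAt t p) →
    (aFlat j (ts.map addrs)).filter P = naF j ts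
  | [], j, P, _ => rfl
  | t :: ts, j, P, h => by
      simp only [List.map_cons, aFlat, naF, List.filter_append, List.filter_map]
      have h0 : (addrs t).filter (P ∘ (fun p => j :: p)) = nodeAddrs t := by
        unfold nodeAddrs
        exact List.filter_congr (fun p _ => by simpa using h 0 t p (by simp))
      rw [h0, filter_aFlat ts (j+1) P (fun k u p hk => by
          have := h (k+1) u p (by simpa using hk)
          simpa [Nat.add_assoc, Nat.add_comm 1 k] using this)]

theorem nodeAddrs_leaf : nodeAddrs (σ := σ) .leaf = [] := by
  unfold nodeAddrs
  rw [addrs]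
  simp [isNodeAt, subAt_nil]

theorem nodeAddrs_node (s : σ.carrier) (l : List (PreTerm σ)) :
    nodeAddrs (.node s l) = [] :: naF 0 l := by
  unfold nodeAddrs
  rw [addrs_node, List.filter_cons]
  have hroot : isNodeAt (.node s l) [] = true := by
    unfold isNodeAt; rw [subAt_nil]
  rw [hroot]
  simp only [if_true]
  congr 1
  exact filter_aFlat l 0 _ (fun k t p hk => by
    simpa using isNodeAt_cons s l k p t hk)

theorem mem_naF : ∀ (ts : List (PreTerm σ)) (j : ℕ) (q : List ℕ),
    q ∈ naF j ts ↔ ∃ k t p, ts[k]? = some t ∧ p ∈ nodeAddrs t ∧ q = (j+k) :: p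
  | [], j, q => by simp [naF]
  | t :: ts, j, q => by
      simp only [naF, List.mem_append, List.mem_map, mem_naF ts (j+1) q]
      constructor
      · rintro (⟨p, hp, rfl⟩ | ⟨k, u, p, hk, hp, rfl⟩)
        · exact ⟨0, t, p, by simp, hp, rfl⟩
        · exact ⟨k+1, u, p, by simpa using hk, hp, by simp [Nat.add_assoc, Nat.add_comm 1 k]⟩
      · rintro ⟨k, u, p, hk, hp, rfl⟩
        cases k with
        | zero =>
            have ht : t = u := by simpa using hk
            subst ht
            exact Or.inl ⟨p, hp, rfl⟩
        | succ k =>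
            right
            exact ⟨k, u, p, by simpa using hk, hp, by simp [Nat.add_assoc, Nat.add_comm 1 k]⟩

theorem naF_head_ge {ts : List (PreTerm σ)} {j : ℕ} {q : List ℕ} (h : q ∈ naF j ts) :
    ∃ h' r, q = h' :: r ∧ j ≤ h' := by
  obtain ⟨k, t, p, _, _, rfl⟩ := (mem_naF ts j q).1 h
  exact ⟨j+k, p, rfl, Nat.le_add_right _ _⟩

mutual
theorem nodup_nodeAddrs : ∀ (T : PreTerm σ), (nodeAddrs T).Nodup
  | .leaf => by rw [nodeAddrs_leaf]; exact List.nodup_nil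
  | .node s l => by
      rw [nodeAddrs_node]
      refine List.nodup_cons.2 ⟨fun h => ?_, nodup_naF 0 l⟩
      · obtain ⟨h', r, heq, _⟩ := naF_head_ge h
        cases heq
  termination_by T => sizeOf T
theorem nodup_naF : ∀ (j : ℕ) (ts : List (PreTerm σ)), (naF j ts).Nodup
  | _, [] => List.nodup_nil
  | j, t :: ts => by
      refine List.Nodup.append ?_ (nodup_naF (j+1) ts) ?_
      · exact (nodup_nodeAddrs t).map (fun a b h => by injection h)
      · intro q hq hq'
        obtain ⟨p, _, rfl⟩ := List.mem_map.1 hq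
        obtain ⟨h', r, heq, hge⟩ := naF_head_ge hq'
        injection heq with h1 _
        omega
  termination_by j ts => sizeOf ts
end

theorem naF_split : ∀ (ts : List (PreTerm σ)) (j k : ℕ) (t : PreTerm σ),
    ts[k]? = some t →
    ∃ C₁ C₂, naF j ts = C₁ ++ (nodeAddrs t).map ((j+k) :: ·) ++ C₂ ∧
      (∀ q ∈ C₁, ∀ r, q ≠ (j+k) :: r) ∧ (∀ q ∈ C₂, ∀ r, q ≠ (j+k) :: r)
  | [], _, k, _, h => by simp at h
  | u :: ts, j, 0, t, h => by
      have hu : u = t := by simpa using h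
      subst hu
      refine ⟨[], naF (j+1) ts, ?_, by simp, ?_⟩
      · simp [naF]
      · intro q hq r hr
        obtain ⟨h', r', heq, hge⟩ := naF_head_ge hq
        rw [hr] at heq
        injection heq with h1 _
        omega
  | u :: ts, j, k+1, t, h => by
      obtain ⟨C₁, C₂, hsplit, h₁, h₂⟩ := naF_split ts (j+1) k t (by simpa using h)
      have harith : j + 1 + k = j + (k + 1) := by omega
      rw [harith] at hsplit h₁ h₂
      refine ⟨(nodeAddrs u).map (j :: ·) ++ C₁, C₂, ?_, ?_, ?_⟩
      · rw [naF, hsplit]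
        simp [List.append_assoc]
      · intro q hq r hr
        rcases List.mem_append.1 hq with hq | hq
        · obtain ⟨p, _, heq⟩ := List.mem_map.1 hq
          rw [hr] at heq
          injection heq with h1 _
          omega
        · exact h₁ q hq r hr
      · intro q hq r hr
        exact h₂ q hq r hr

theorem block : ∀ (p : List ℕ) (T : PreTerm σ), p ∈ nodeAddrs T →
    ∃ S A₁ A₂, subAt T p = some S ∧
      nodeAddrs T = A₁ ++ (nodeAddrs S).map (p ++ ·) ++ A₂ ∧
      (∀ q ∈ A₁, ¬ p <+: q) ∧ (∀ q ∈ A₂, ¬ p <+: q) := by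
  intro p
  induction p with
  | nil =>
      intro T _
      exact ⟨T, [], [], subAt_nil T, by simp, by simp, by simp⟩
  | cons j p' ih =>
      intro T hmem
      cases T with
      | leaf => rw [nodeAddrs_leaf] at hmem; simp at hmem
      | node s l =>
          rw [nodeAddrs_node] at hmem
          rcases List.mem_cons.1 hmem with h | h
          · exact absurd h (by simp)
          obtain ⟨k, t, p0, hk, hp0, heq⟩ := (mem_naF l 0 _).1 h
          simp only [Nat.zero_add] at heq
          injection heq with hj hp'
          subst hj; subst hp'
          obtain ⟨S, B₁, B₂, hsub, hdec, hB₁, hB₂⟩ := ih t hp0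
          obtain ⟨C₁, C₂, hsplit, hC₁, hC₂⟩ := naF_split l 0 j t hk
          simp only [Nat.zero_add] at hsplit hC₁ hC₂
          refine ⟨S, [] :: (C₁ ++ (B₁.map (j :: ·))), (B₂.map (j :: ·)) ++ C₂, ?_, ?_, ?_, ?_⟩
          · rw [subAt_cons, hk]
            exact hsub
          · rw [nodeAddrs_node, hsplit, hdec]
            simp only [List.map_append, List.map_map]
            have : ((j :: ·) ∘ (p' ++ ·)) = (((j :: p') ++ ·) : List ℕ → List ℕ) := by
              funext r; rfl
            rw [this]
            simp
          · intro q hq hpre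
            rcases List.mem_cons.1 hq with rfl | hq
            · simp at hpre
            rcases List.mem_append.1 hq with hq | hq
            · obtain ⟨r, hr⟩ := hpre
              exact hC₁ q hq (p' ++ r) (by rw [← hr]; simp)
            · obtain ⟨b, hb, rfl⟩ := List.mem_map.1 hq
              exact hB₁ b hb ((List.prefix_cons_inj j).1 hpre)
          · intro q hq hpre
            rcases List.mem_append.1 hq with hq | hq
            · obtain ⟨b, hb, rfl⟩ := List.mem_map.1 hq
              exact hB₂ b hb ((List.prefix_cons_inj j).1 hpre)
            · obtain ⟨r, hr⟩ := hpre
              exact hC₂ q hq (p' ++ r) (by rw [← hr]; simp)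

theorem parent_mem : ∀ (p : List ℕ) (T : PreTerm σ), p ∈ nodeAddrs T → p ≠ [] →
    p.dropLast ∈ nodeAddrs T := by
  intro p
  induction p with
  | nil => intro T _ h; exact absurd rfl h
  | cons j p' ih =>
      intro T hmem _
      cases T with
      | leaf => rw [nodeAddrs_leaf] at hmem; simp at hmem
      | node s l =>
          rw [nodeAddrs_node] at hmem
          rcases List.mem_cons.1 hmem with h | h
          · exact absurd h (by simp)
          obtain ⟨k, t, p0, hk, hp0, heq⟩ := (mem_naF l 0 _).1 h
          simp only [Nat.zero_add] at heq
          injection heq with hj hp'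
          subst hj
          rw [nodeAddrs_node]
          cases p0 with
          | nil =>
              subst hp'
              simp
          | cons a p1 =>
              subst hp'
              have hplm := ih t hp0 (by simp)
              rw [List.dropLast_cons_of_ne_nil (by simp)]
              exact List.mem_cons_of_mem _ ((mem_naF l 0 _).2
                ⟨j, t, (a :: p1).dropLast, hk, hplm, by simp⟩)

theorem mem_nodeAddrs_isNode {T : PreTerm σ} {p : List ℕ} (h : p ∈ nodeAddrs T) :
    ∃ s' l', subAt T p = some (.node s' l') := by
  have h2 := (List.mem_filter.1 h).2
  unfold isNodeAt at h2
  cases hs : subAt T p with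
  | none => rw [hs] at h2; simp at h2
  | some t =>
      cases t with
      | leaf => rw [hs] at h2; simp at h2
      | node s' l' => exact ⟨s', l', rfl⟩

theorem index_block {A A₁ B A₂ : List (List ℕ)} (hA : A = A₁ ++ B ++ A₂)
    (hnd : A.Nodup) (k : ℕ) (hk : k < B.length) :
    A₁.length + k < A.length ∧ A[A₁.length + k]? = some (B[k]) ∧
      A.idxOf B[k] = A₁.length + k := by
  have hlen : A.length = A₁.length + B.length + A₂.length := by
    rw [hA]; simp only [List.length_append]
  have hlt : A₁.length + k < A.length := by omega
  have hsome : A[A₁.length + k]? = some (B[k]) := by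
    rw [hA, List.append_assoc, List.getElem?_append_right (Nat.le_add_right _ _)]
    rw [Nat.add_sub_cancel_left, List.getElem?_append_left hk]
    exact List.getElem?_eq_getElem hk
  have hget : A[A₁.length + k]'hlt = B[k] := by
    have h2 := hsome
    rw [List.getElem?_eq_getElem hlt] at h2
    exact Option.some.inj h2
  refine ⟨hlt, hsome, ?_⟩
  rw [← hget]
  have hbeq : (instBEqOfDecidableEq : BEq (List ℕ)) = List.instBEq :=
    lawful_beq_subsingleton _ _
  have := List.Nodup.idxOf_getElem hnd (A₁.length + k) hlt
  exact this

theorem beqEq : (instBEqOfDecidableEq : BEq (List ℕ)) = List.instBEq :=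
  lawful_beq_subsingleton _ _

theorem idx_getElem {A : List (List ℕ)} (hnd : A.Nodup) (i : ℕ) (h : i < A.length) :
    A.idxOf (A[i]'h) = i := by
  have := List.Nodup.idxOf_getElem hnd i h
  exact this

theorem idx_lt {A : List (List ℕ)} {p : List ℕ} (h : p ∈ A) : A.idxOf p < A.length := by
  have := List.idxOf_lt_length_iff.2 h
  exact this

theorem getElem_idx {A : List (List ℕ)} {p : List ℕ} (hm : p ∈ A) (h : A.idxOf p < A.length) :
    A[A.idxOf p]'h = p := by
  have h2 := List.getElem?_idxOf hm
  rw [List.getElem?_eq_getElem h] at h2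
  exact Option.some.inj h2

theorem sc_eq {T : PreTerm σ} {i : ℕ} {p : List ℕ} {S : PreTerm σ}
    (h1 : nodeAddr T i = some p) (h2 : subAt T p = some S) : sc T i = deg S - 1 := by
  unfold sc
  rw [h1]
  show (match subAt T p with | some S => deg S - 1 | none => 0) = deg S - 1
  rw [h2]

theorem paOf_eq {T : PreTerm σ} {i x : ℕ} {xs : List ℕ} (h : nodeAddr T i = some (x :: xs)) :
    paOf T i = (nodeAddrs T).idxOf (x :: xs).dropLast + 1 := by
  unfold paOf
  rw [h]
  rfl

theorem block' {T : PreTerm σ} {p : List ℕ} (h : p ∈ nodeAddrs T) :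
    ∃ S A₁ A₂, subAt T p = some S ∧ 1 ≤ deg S ∧
      nodeAddrs T = A₁ ++ (nodeAddrs S).map (p ++ ·) ++ A₂ ∧
      (nodeAddrs S)[0]? = some ([] : List ℕ) ∧
      (∀ q ∈ A₁, ¬ p <+: q) ∧ (∀ q ∈ A₂, ¬ p <+: q) := by
  obtain ⟨S, A₁, A₂, hsub, hdec, h₁, h₂⟩ := block p T h
  obtain ⟨s', l', hS⟩ := mem_nodeAddrs_isNode h
  rw [hsub] at hS
  obtain rfl : S = .node s' l' := Option.some.inj hS
  refine ⟨_, A₁, A₂, hsub, ?_, hdec, ?_, h₁, h₂⟩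
  · show 1 ≤ (nodeAddrs (.node s' l')).length
    rw [nodeAddrs_node]
    simp
  · rw [nodeAddrs_node]
    simp

theorem indexOf_block {T : PreTerm σ} {p : List ℕ} {S : PreTerm σ} {A₁ A₂ : List (List ℕ)}
    (hnd : (nodeAddrs T).Nodup)
    (hdec : nodeAddrs T = A₁ ++ (nodeAddrs S).map (p ++ ·) ++ A₂)
    (h0 : (nodeAddrs S)[0]? = some ([] : List ℕ)) :
    (nodeAddrs T).idxOf p = A₁.length := by
  obtain ⟨h0l, hget⟩ := List.getElem?_eq_some_iff.1 h0
  have h0l' : 0 < ((nodeAddrs S).map (p ++ ·)).length := by simpa using h0l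
  have hB0 : ((nodeAddrs S).map (p ++ ·))[0]'h0l' = p := by
    rw [List.getElem_map, hget]
    simp
  obtain ⟨-, -, hidx⟩ := index_block hdec hnd 0 h0l'
  rw [hB0] at hidx
  simpa using hidx

/-- For `q = (nodeAddrs T)[b]` in the block of `p`, its index `b` satisfies
`indexOf p ≤ b < indexOf p + deg S`, and conversely positions in that interval
are extensions of `p`. -/
theorem mem_block_iff {T : PreTerm σ} {p : List ℕ} {S : PreTerm σ} {A₁ A₂ : List (List ℕ)}
    (hnd : (nodeAddrs T).Nodup)
    (hdec : nodeAddrs T = A₁ ++ (nodeAddrs S).map (p ++ ·) ++ A₂)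
    (h₁ : ∀ q ∈ A₁, ¬ p <+: q) (h₂ : ∀ q ∈ A₂, ¬ p <+: q)
    {q : List ℕ} (hq : q ∈ nodeAddrs T) (hpre : p <+: q) :
    ∃ k, k < deg S ∧ (nodeAddrs T).idxOf q = A₁.length + k := by
  have hqB : q ∈ (nodeAddrs S).map (p ++ ·) := by
    rw [hdec] at hq
    rcases List.mem_append.1 hq with hq' | hq'
    · rcases List.mem_append.1 hq' with hq'' | hq''
      · exact absurd hpre (h₁ q hq'')
      · exact hq''
    · exact absurd hpre (h₂ q hq')
  obtain ⟨k, hk, hbk⟩ := List.mem_iff_getElem.1 hqB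
  refine ⟨k, by simpa [deg] using hk, ?_⟩
  obtain ⟨-, -, hidx⟩ := index_block hdec hnd k hk
  rw [hbk] at hidx
  exact hidx

/-- Positions in the block of `p` carry extensions of `p`. -/
theorem getElem?_block {T : PreTerm σ} {p : List ℕ} {S : PreTerm σ} {A₁ A₂ : List (List ℕ)}
    (hnd : (nodeAddrs T).Nodup)
    (hdec : nodeAddrs T = A₁ ++ (nodeAddrs S).map (p ++ ·) ++ A₂)
    (k : ℕ) (hk : k < deg S) :
    ∃ r, (nodeAddrs T)[A₁.length + k]? = some (p ++ r) := by
  have hk' : k < ((nodeAddrs S).map (p ++ ·)).length := by simpa [deg] using hk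
  obtain ⟨hlt, hsome, -⟩ := index_block hdec hnd k hk'
  refine ⟨(nodeAddrs S)[k]'(by simpa [deg] using hk), ?_⟩
  rw [hsome, List.getElem_map]
  rfl

end EW


/-- for an internal node `i ≠ root` of a Σ-term `T`, the parent of
`i` is the greatest internal node `i'` such that `i' < i` and
`i' + sc T i' ≥ i`. -/
theorem stmt9 (σ : Signature) (T : EW.PreTerm σ) (hT : EW.WF T)
    (i : ℕ) (hi1 : 2 ≤ i) (hi2 : i ≤ EW.deg T) :
    (1 ≤ EW.paOf T i ∧ EW.paOf T i < i ∧ i ≤ EW.paOf T i + EW.sc T (EW.paOf T i)) ∧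
    ∀ i', 1 ≤ i' → i' < i → i ≤ i' + EW.sc T i' → i' ≤ EW.paOf T i := by
  have hnd := EW.nodup_nodeAddrs T
  have hlenA : EW.deg T = (EW.nodeAddrs T).length := rfl
  have hbn : i - 1 < (EW.nodeAddrs T).length := by omega
  obtain ⟨q, hqel⟩ : ∃ q, (EW.nodeAddrs T)[i-1]'hbn = q := ⟨_, rfl⟩
  have hq? : EW.nodeAddr T i = some q := by
    rw [← hqel]; exact List.getElem?_eq_getElem hbn
  have hqmem : q ∈ EW.nodeAddrs T := hqel ▸ List.getElem_mem _
  have hqidx : (EW.nodeAddrs T).idxOf q = i - 1 := by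
    rw [← hqel]; exact EW.idx_getElem hnd _ hbn
  have h0n : 0 < (EW.nodeAddrs T).length := by omega
  have hT0 : (EW.nodeAddrs T)[0]'h0n = [] := by
    cases T with
    | leaf =>
        exfalso
        rw [EW.nodeAddrs_leaf] at h0n
        simp at h0n
    | node s l => simp [EW.nodeAddrs_node]
  have hqne : q ≠ [] := by
    intro h
    have e := hqidx
    rw [h, ← hT0, EW.idx_getElem hnd 0 h0n] at e
    omega
  have hql : 0 < q.length := List.length_pos_iff.2 hqne
  obtain ⟨p, hpd⟩ : ∃ p, q.dropLast = p := ⟨_, rfl⟩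
  have hpmem : p ∈ EW.nodeAddrs T := hpd ▸ EW.parent_mem q T hqmem hqne
  obtain ⟨a, hadef⟩ : ∃ a, (EW.nodeAddrs T).idxOf p = a := ⟨_, rfl⟩
  have ha : a < (EW.nodeAddrs T).length := hadef ▸ EW.idx_lt hpmem
  have hpel : (EW.nodeAddrs T)[a]'ha = p := by
    subst hadef; exact EW.getElem_idx hpmem ha
  have hpa : EW.paOf T i = a + 1 := by
    obtain ⟨x, xs, hxq⟩ : ∃ x xs, q = x :: xs := by
      cases q with
      | nil => exact absurd rfl hqne
      | cons x xs => exact ⟨x, xs, rfl⟩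
    subst hxq
    rw [EW.paOf_eq hq?, hpd, hadef]
  have hprefix : p <+: q := hpd ▸ List.dropLast_prefix q
  have hplen : p.length + 1 = q.length := by
    rw [← hpd, List.length_dropLast]; omega
  obtain ⟨S, A₁, A₂, hsub, hSdeg, hdec, h0, h₁, h₂⟩ := EW.block' hpmem
  have haA1 : a = A₁.length := by rw [← hadef, EW.indexOf_block hnd hdec h0]
  obtain ⟨k, hk, hkidx⟩ := EW.mem_block_iff hnd hdec h₁ h₂ hqmem hprefix
  have hbk : i - 1 = a + k := by rw [← hqidx, hkidx, haA1]
  have hpq : p ≠ q := fun h => by rw [h] at hplen; omega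
  have hk0 : k ≠ 0 := by
    intro h
    apply hpq
    have hai : a = i - 1 := by omega
    subst hai
    exact (hqel.symm.trans hpel).symm
  have hna : EW.nodeAddr T (a+1) = some p := by
    show (EW.nodeAddrs T)[a+1-1]? = some p
    simp only [Nat.add_sub_cancel]
    rw [← hpel]
    exact List.getElem?_eq_getElem ha
  have hscp : EW.sc T (a+1) = EW.deg S - 1 := EW.sc_eq hna hsub
  constructor
  · refine ⟨by omega, by omega, ?_⟩
    rw [hpa, hscp]
    omega
  · intro i' h1' h2' h3'
    have hbn' : i' - 1 < (EW.nodeAddrs T).length := by omega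
    obtain ⟨p', hp'el⟩ : ∃ p', (EW.nodeAddrs T)[i'-1]'hbn' = p' := ⟨_, rfl⟩
    have hp'mem : p' ∈ EW.nodeAddrs T := hp'el ▸ List.getElem_mem _
    have hna' : EW.nodeAddr T i' = some p' := by
      rw [← hp'el]; exact List.getElem?_eq_getElem hbn'
    have hp'idx : (EW.nodeAddrs T).idxOf p' = i' - 1 := by
      rw [← hp'el]; exact EW.idx_getElem hnd _ hbn'
    obtain ⟨S', B₁, B₂, hsub', hS'deg, hdec', h0', h₁', h₂'⟩ := EW.block' hp'mem
    have hsc' : EW.sc T i' = EW.deg S' - 1 := EW.sc_eq hna' hsub'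
    rw [hsc'] at h3'
    have hB1 : B₁.length = i' - 1 := by
      rw [← EW.indexOf_block hnd hdec' h0', hp'idx]
    have hk' : (i - 1) - (i' - 1) < EW.deg S' := by omega
    obtain ⟨r, hsome⟩ := EW.getElem?_block hnd hdec' ((i - 1) - (i' - 1)) hk'
    have hix : B₁.length + ((i - 1) - (i' - 1)) = i - 1 := by omega
    rw [hix] at hsome
    have hq2 : (EW.nodeAddrs T)[i-1]? = some q := by
      rw [← hqel]; exact List.getElem?_eq_getElem hbn
    rw [hq2] at hsome
    have hpre' : p' <+: q := ⟨r, (Option.some.inj hsome).symm⟩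
    have hp'q : p' ≠ q := by
      intro h
      rw [h, hqidx] at hp'idx
      omega
    have hlen' : p'.length < q.length :=
      Nat.lt_of_le_of_ne hpre'.length_le (fun h => hp'q (hpre'.eq_of_length h))
    have hp'p : p' <+: p :=
      List.prefix_of_prefix_length_le hpre' hprefix (by omega)
    obtain ⟨k2, hk2, hk2idx⟩ := EW.mem_block_iff hnd hdec' h₁' h₂' hpmem hp'p
    rw [hadef] at hk2idx
    rw [hpa]
    omega
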